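/- For a symmetric (p,p)-double form ω on an n-dimensional inner product space, the full contraction of F_h(ω) satisfies c^p(F_h(ω)) = 2p·⟨c^{p-1}ω, h⟩. -/
import Mathlib


open scoped BigOperators
open scoped Classical

noncomputable section

/-- A `(p,q)`-double form on `ℝⁿ`, given by its components with respect to the
standard orthonormal basis: a scalar-valued function of a row multi-index and a
column multi-index. -/
def DForm (n p q : ℕ) : Type := (Fin p → Fin n) → (Fin q → Fin n) → ℝ

namespace DForm

variable {n : ℕ}

/-- Transport a double form along equalities of the bidegrees. -/
def cast' {p q p' q' : ℕ} (hp : p = p') (hq : q = q') (ω : DForm n p q) :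
    DForm n p' q' :=
  fun I J => ω (fun a => I (Fin.cast hp a)) (fun b => J (Fin.cast hq b))

/-- A double form is alternating in each of its two blocks of arguments. -/
def IsAlt {p q : ℕ} (ω : DForm n p q) : Prop :=
  (∀ (σ : Equiv.Perm (Fin p)) (I : Fin p → Fin n) (J : Fin q → Fin n),
      ω (I ∘ σ) J = ((Equiv.Perm.sign σ : ℤ) : ℝ) * ω I J) ∧
  (∀ (τ : Equiv.Perm (Fin q)) (I : Fin p → Fin n) (J : Fin q → Fin n),
      ω I (J ∘ τ) = ((Equiv.Perm.sign τ : ℤ) : ℝ) * ω I J) ∧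
  (∀ (I : Fin p → Fin n) (J : Fin q → Fin n),
      (¬ Function.Injective I ∨ ¬ Function.Injective J) → ω I J = 0)

/-- A `(p,p)`-double form is symmetric. -/
def IsSym {p : ℕ} (ω : DForm n p p) : Prop := ∀ I J, ω I J = ω J I

/-- The exterior (Kulkarni–Nomizu type) product of double forms:
`(α₁⊗β₁)·(α₂⊗β₂) = (α₁∧α₂)⊗(β₁∧β₂)` in components. -/
def mul {p q r s : ℕ} (ω : DForm n p q) (θ : DForm n r s) :
    DForm n (p + r) (q + s) :=
  fun I J =>
    (((p.factorial * r.factorial * q.factorial * s.factorial : ℕ) : ℝ))⁻¹ *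
      ∑ σ : Equiv.Perm (Fin (p + r)), ∑ τ : Equiv.Perm (Fin (q + s)),
        ((Equiv.Perm.sign σ : ℤ) : ℝ) * ((Equiv.Perm.sign τ : ℤ) : ℝ) *
          ω (fun a => I (σ (Fin.castAdd r a))) (fun b => J (τ (Fin.castAdd s b))) *
          θ (fun a => I (σ (Fin.natAdd p a))) (fun b => J (τ (Fin.natAdd q b)))

/-- The contraction map `c : D^{p+1,q+1} → D^{p,q}` (trace over the orthonormal
basis in the first slot of each block). -/
def contr {p q : ℕ} (ω : DForm n (p + 1) (q + 1)) : DForm n p q :=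
  fun I J => ∑ i : Fin n, ω (Fin.cons i I) (Fin.cons i J)

/-- Total version of the contraction (zero when a bidegree is `0`). -/
def contr' : {p q : ℕ} → DForm n p q → DForm n (p - 1) (q - 1)
  | _ + 1, _ + 1, ω => contr ω
  | 0, _, _ => fun _ _ => 0
  | _ + 1, 0, _ => fun _ _ => 0

/-- Iterated contraction `c^k : D^{p+k,q+k} → D^{p,q}`. -/
def cIter {p q : ℕ} : (k : ℕ) → DForm n (p + k) (q + k) → DForm n p q
  | 0, ω => ω
  | k + 1, ω => cIter k (contr ω)

/-- The full contraction `c^p` of a `(p,p)`-double form, a scalar. -/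
def fullc {p : ℕ} (ω : DForm n p p) : ℝ :=
  cIter (p := 0) (q := 0) p
    (cast' (Nat.zero_add p).symm (Nat.zero_add p).symm ω) Fin.elim0 Fin.elim0

/-- The metric of `ℝⁿ` as a `(1,1)`-double form. -/
def gd : DForm n 1 1 := fun I J => if I 0 = J 0 then 1 else 0

/-- Powers `g^p` of the metric in the ring of double forms. -/
def gpow : (p : ℕ) → DForm n p p
  | 0 => fun _ _ => 1
  | p + 1 => mul (gpow p) gd

/-- Powers `ω^k` of a `(p,p)`-double form in the ring of double forms. -/
def pow {p : ℕ} (ω : DForm n p p) : (k : ℕ) → DForm n (p * k) (p * k)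
  | 0 => fun _ _ => 1
  | k + 1 => mul (pow ω k) ω

/-- The natural pointwise inner product on `(p,q)`-double forms. -/
def innerPQ {p q : ℕ} (ω θ : DForm n p q) : ℝ :=
  (((p.factorial * q.factorial : ℕ) : ℝ))⁻¹ *
    ∑ I : Fin p → Fin n, ∑ J : Fin q → Fin n, ω I J * θ I J

/-- The sign of the permutation of `{1,…,n}` obtained by concatenating the
multi-indices `K` and `I` (zero if it is not a permutation). -/
def epsSign {p : ℕ} (hp : p ≤ n) (K : Fin p → Fin n) (I : Fin (n - p) → Fin n) : ℝ :=
  if h : Function.Bijective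
      (fun a : Fin n => Fin.append K I (Fin.cast (by omega) a)) then
    ((Equiv.Perm.sign (Equiv.ofBijective _ h) : ℤ) : ℝ)
  else 0

/-- The generalized Hodge star operator on double forms, acting as the usual
Hodge star on each factor. -/
def hstar {p q : ℕ} (hp : p ≤ n) (hq : q ≤ n) (ω : DForm n p q) :
    DForm n (n - p) (n - q) :=
  fun I J =>
    (((p.factorial * q.factorial : ℕ) : ℝ))⁻¹ *
      ∑ K : Fin p → Fin n, ∑ L : Fin q → Fin n,
        epsSign hp K I * epsSign hq L J * ω K L

/-- The operator `F_h` associated with a symmetric bilinear form `h`: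
in an orthonormal basis diagonalizing `h` it multiplies the `(I,J)` component by
the sum of the eigenvalues of `h` over the indices in `I` and `J`.
Coordinate-free version: insert the endomorphism of `h` in each slot. -/
def Fh {p q : ℕ} (h : Fin n → Fin n → ℝ) (ω : DForm n p q) : DForm n p q :=
  fun I J =>
    (∑ k : Fin p, ∑ i : Fin n, h (I k) i * ω (Function.update I k i) J) +
    (∑ k : Fin q, ∑ i : Fin n, h (J k) i * ω I (Function.update J k i))

/-- A bilinear form on `ℝⁿ` viewed as a `(1,1)`-double form. -/
def ofBilin (h : Fin n → Fin n → ℝ) : DForm n 1 1 := fun I J => h (I 0) (J 0)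

/-- The first Bianchi identity for a `(2,2)`-double form. -/
def Bianchi1 (R : DForm n 2 2) : Prop :=
  ∀ x y z u : Fin n,
    R ![x, y] ![z, u] + R ![y, z] ![x, u] + R ![z, x] ![y, u] = 0

end DForm

end

section Aux

open scoped Classical

variable {n : ℕ}

private def prep {n p : ℕ} : {k : ℕ} → (Fin k → Fin n) → (Fin p → Fin n) → Fin (p + k) → Fin n
  | 0, _, I => I
  | _ + 1, K, I => Fin.cons (K 0) (prep (Fin.tail K) I)

private lemma prep_cons {p k : ℕ} (i : Fin n) (K : Fin k → Fin n) (I : Fin p → Fin n) :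
    prep (Fin.cons i K) I = Fin.cons i (prep K I) := by
  simp [prep, Fin.tail_cons]

private lemma prep_apply {p : ℕ} :
    ∀ {k : ℕ} (K : Fin k → Fin n) (I : Fin p → Fin n) (a : Fin (p + k)),
    prep K I a = if h : (a : ℕ) < k then K ⟨a, h⟩ else I ⟨(a : ℕ) - k, by omega⟩
  | 0, K, I, a => by
      rw [dif_neg (by omega)]
      exact congrArg I (Fin.ext (by simp))
  | k + 1, K, I, a => by
      simp only [prep]
      refine Fin.cases ?_ ?_ a
      · rw [Fin.cons_zero, dif_pos (by simp)]
        exact congrArg K (Fin.ext (by simp))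
      · intro b
        rw [Fin.cons_succ, prep_apply (Fin.tail K) I b]
        by_cases hb : (b : ℕ) < k
        · rw [dif_pos hb, dif_pos (by simp only [Fin.val_succ]; omega)]
          simp only [Fin.tail]
          exact congrArg K (Fin.ext (by simp))
        · rw [dif_neg hb, dif_neg (by simp only [Fin.val_succ]; omega)]
          exact congrArg I (Fin.ext (by simp only [Fin.val_succ]; omega))

private lemma cIter_eq_sum {p q : ℕ} :
    ∀ (k : ℕ) (θ : DForm n (p + k) (q + k)) (I : Fin p → Fin n) (J : Fin q → Fin n),
    DForm.cIter k θ I J = ∑ K : Fin k → Fin n, θ (prep K I) (prep K J)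
  | 0, θ, I, J => by
      rw [Fintype.sum_unique]
      rfl
  | k + 1, θ, I, J => by
      show DForm.cIter k (DForm.contr θ) I J = _
      rw [cIter_eq_sum k]
      have step : ∀ K : Fin k → Fin n, DForm.contr θ (prep K I) (prep K J)
          = ∑ i : Fin n, θ (prep (Fin.cons i K) I) (prep (Fin.cons i K) J) := by
        intro K
        simp [DForm.contr, prep_cons]
      rw [Finset.sum_congr rfl (fun K _ => step K)]
      rw [← (Fin.consEquiv (fun _ : Fin (k + 1) => Fin n)).sum_comp
          (fun K' => θ (prep K' I) (prep K' J)), Fintype.sum_prod_type, Finset.sum_comm]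
      simp [Fin.consEquiv]

private lemma prep_elim0_cast {m : ℕ} (K : Fin m → Fin n) (hm : m = 0 + m) :
    (fun a : Fin m => prep K Fin.elim0 (Fin.cast hm a)) = K := by
  funext a
  rw [prep_apply, dif_pos (by simpa using a.isLt)]
  exact congrArg K (Fin.ext (by simp))

private lemma fullc_eq_sum {m : ℕ} (θ : DForm n m m) :
    DForm.fullc θ = ∑ I : Fin m → Fin n, θ I I := by
  unfold DForm.fullc
  rw [cIter_eq_sum]
  refine Finset.sum_congr rfl fun K _ => ?_
  unfold DForm.cast'
  rw [prep_elim0_cast K (Nat.zero_add m).symm]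

private lemma prep_snoc {k : ℕ} (K : Fin k → Fin n) (I : Fin 1 → Fin n) (hk : k + 1 = 1 + k) :
    (fun t : Fin (k + 1) => prep K I (Fin.cast hk t)) = Fin.snoc K (I 0) := by
  funext t
  rw [prep_apply]
  by_cases ht : (t : ℕ) < k
  · rw [dif_pos (by simpa using ht)]
    have hs : (Fin.snoc K (I 0) : Fin (k + 1) → Fin n) t = K ⟨t, ht⟩ := by
      have h2 : (Fin.snoc K (I 0) : Fin (k + 1) → Fin n) (Fin.castSucc ⟨(t : ℕ), ht⟩)
          = K ⟨t, ht⟩ := Fin.snoc_castSucc ..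
      rw [← h2]
      exact congrArg (Fin.snoc K (I 0) : Fin (k + 1) → Fin n) (Fin.ext (by simp))
    rw [hs]
    exact congrArg K (Fin.ext (by simp))
  · rw [dif_neg (by simpa using ht)]
    have hs : (Fin.snoc K (I 0) : Fin (k + 1) → Fin n) t = I 0 := by
      have h2 : t = Fin.last k := Fin.ext (by have := t.isLt; simp only [Fin.val_last]; omega)
      rw [h2, Fin.snoc_last]
    rw [hs]
    exact congrArg I (Subsingleton.elim _ _)

end Aux

/-- For a symmetric `(p,p)`-double form `ω` with `p ≥ 1`
(written `p+1`), the full contraction of `F_h(ω)` satisfies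
`c^p(F_h(ω)) = 2p·⟨c^{p-1}ω, h⟩`. -/
theorem fullc_Fh {n p : ℕ} (h : Fin n → Fin n → ℝ)
    (hsymm : ∀ i j, h i j = h j i)
    (ω : DForm n (p + 1) (p + 1))
    (hω : DForm.IsAlt ω) (hωs : DForm.IsSym ω) :
    DForm.fullc (DForm.Fh h ω) =
      2 * ((p : ℝ) + 1) *
        DForm.innerPQ
          (DForm.cIter (p := 1) (q := 1) p (DForm.cast' (by omega) (by omega) ω))
          (DForm.ofBilin h) := by
  classical
  obtain ⟨hrow, hcol, -⟩ := hω
  -- the common value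
  set T : ℝ := ∑ K : Fin p → Fin n, ∑ a : Fin n, ∑ b : Fin n,
      h a b * ω (Fin.snoc K a) (Fin.snoc K b) with hT
  -- LHS computation
  have hdiag : ∀ I : Fin (p + 1) → Fin n, DForm.Fh h ω I I
      = 2 * ∑ k : Fin (p + 1), ∑ i : Fin n, h (I k) i * ω (Function.update I k i) I := by
    intro I
    show (∑ k, ∑ i, h (I k) i * ω (Function.update I k i) I)
        + (∑ k, ∑ i, h (I k) i * ω I (Function.update I k i)) = _
    rw [two_mul]
    congr 1
    refine Finset.sum_congr rfl fun k _ => Finset.sum_congr rfl fun i _ => ?_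
    rw [hωs]
  have hswap : ∀ k : Fin (p + 1),
      (∑ I : Fin (p + 1) → Fin n, ∑ i : Fin n, h (I k) i * ω (Function.update I k i) I)
      = ∑ I : Fin (p + 1) → Fin n, ∑ i : Fin n,
          h (I (Fin.last p)) i * ω (Function.update I (Fin.last p) i) I := by
    intro k
    set σ : Equiv.Perm (Fin (p + 1)) := Equiv.swap k (Fin.last p) with hσ
    have hbij : Function.Bijective (fun I : Fin (p + 1) → Fin n => I ∘ σ) :=
      (Equiv.arrowCongr σ.symm (Equiv.refl (Fin n))).bijective
    rw [← Function.Bijective.sum_comp hbij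
      (fun I => ∑ i : Fin n, h (I k) i * ω (Function.update I k i) I)]
    refine Finset.sum_congr rfl fun I _ => Finset.sum_congr rfl fun i _ => ?_
    have h1 : (I ∘ σ) k = I (Fin.last p) := by
      show I (σ k) = _
      rw [hσ, Equiv.swap_apply_left]
    have h2 : Function.update (I ∘ ⇑σ) k i = (Function.update I (Fin.last p) i) ∘ ⇑σ := by
      rw [Function.update_comp_equiv I σ (Fin.last p) i, Equiv.symm_swap,
        Equiv.swap_apply_right]
    rw [h1, h2, hrow σ, hcol σ]
    have hsgn : ((Equiv.Perm.sign σ : ℤ) : ℝ) * (((Equiv.Perm.sign σ : ℤ) : ℝ) *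
        ω (Function.update I (Fin.last p) i) I) = ω (Function.update I (Fin.last p) i) I := by
      rcases Int.units_eq_one_or (Equiv.Perm.sign σ) with hs | hs <;> rw [hs] <;> push_cast <;> ring
    rw [hsgn]
  have hG : (∑ I : Fin (p + 1) → Fin n, ∑ i : Fin n,
        h (I (Fin.last p)) i * ω (Function.update I (Fin.last p) i) I) = T := by
    rw [← (Fin.snocEquiv (fun _ : Fin (p + 1) => Fin n)).sum_comp
      (fun I => ∑ i : Fin n, h (I (Fin.last p)) i * ω (Function.update I (Fin.last p) i) I),
      Fintype.sum_prod_type, Finset.sum_comm, hT]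
    refine Finset.sum_congr rfl fun K _ => Finset.sum_congr rfl fun a _ =>
      Finset.sum_congr rfl fun i _ => ?_
    have he : (Fin.snocEquiv (fun _ : Fin (p + 1) => Fin n)) (a, K) = Fin.snoc K a := by
      funext t
      simp [Fin.snocEquiv]
    rw [he, Fin.snoc_last, Fin.update_snoc_last, hωs]
  have hLHS : DForm.fullc (DForm.Fh h ω) = 2 * ((p : ℝ) + 1) * T := by
    rw [fullc_eq_sum, Finset.sum_congr rfl fun I _ => hdiag I, ← Finset.mul_sum,
      Finset.sum_comm, Finset.sum_congr rfl fun k _ => hswap k, Finset.sum_const,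
      Finset.card_univ, Fintype.card_fin, hG, nsmul_eq_mul]
    push_cast
    ring
  rw [hLHS]
  -- RHS computation
  have hα : ∀ (I J : Fin 1 → Fin n),
      DForm.cIter (p := 1) (q := 1) p (DForm.cast' (by omega) (by omega) ω) I J
      = ∑ K : Fin p → Fin n, ω (Fin.snoc K (I 0)) (Fin.snoc K (J 0)) := by
    intro I J
    rw [cIter_eq_sum]
    refine Finset.sum_congr rfl fun K _ => ?_
    unfold DForm.cast'
    rw [prep_snoc K I (by omega), prep_snoc K J (by omega)]
  unfold DForm.innerPQ DForm.ofBilin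
  rw [Finset.sum_congr rfl fun I _ => Finset.sum_congr rfl fun J _ =>
    congrArg (· * h (I 0) (J 0)) (hα I J)]
  rw [← (Equiv.funUnique (Fin 1) (Fin n)).symm.sum_comp
    (fun I : Fin 1 → Fin n => ∑ J : Fin 1 → Fin n,
      (∑ K : Fin p → Fin n, ω (Fin.snoc K (I 0)) (Fin.snoc K (J 0))) * h (I 0) (J 0))]
  have hsum2 : ∀ a : Fin n, (∑ J : Fin 1 → Fin n,
      (∑ K : Fin p → Fin n,
        ω (Fin.snoc K (((Equiv.funUnique (Fin 1) (Fin n)).symm a) 0)) (Fin.snoc K (J 0)))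
        * h (((Equiv.funUnique (Fin 1) (Fin n)).symm a) 0) (J 0))
      = ∑ b : Fin n, (∑ K : Fin p → Fin n, ω (Fin.snoc K a) (Fin.snoc K b)) * h a b := by
    intro a
    rw [← (Equiv.funUnique (Fin 1) (Fin n)).symm.sum_comp
      (fun J : Fin 1 → Fin n => (∑ K : Fin p → Fin n,
        ω (Fin.snoc K (((Equiv.funUnique (Fin 1) (Fin n)).symm a) 0)) (Fin.snoc K (J 0)))
        * h (((Equiv.funUnique (Fin 1) (Fin n)).symm a) 0) (J 0))]
    simp [Equiv.funUnique]
  rw [Finset.sum_congr rfl fun a _ => hsum2 a]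
  have hfinal : (∑ a : Fin n, ∑ b : Fin n,
      (∑ K : Fin p → Fin n, ω (Fin.snoc K a) (Fin.snoc K b)) * h a b) = T := by
    have hmul : ∀ a b : Fin n,
        (∑ K : Fin p → Fin n, ω (Fin.snoc K a) (Fin.snoc K b)) * h a b
        = ∑ K : Fin p → Fin n, h a b * ω (Fin.snoc K a) (Fin.snoc K b) := by
      intro a b
      rw [Finset.sum_mul]
      exact Finset.sum_congr rfl fun K _ => mul_comm _ _
    rw [Finset.sum_congr rfl fun a _ => Finset.sum_congr rfl fun b _ => hmul a b,
      Finset.sum_congr rfl fun a (_ : a ∈ Finset.univ) => Finset.sum_comm,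
      Finset.sum_comm, hT]
  rw [hfinal]
  norm_num [Nat.factorial]
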